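/- Let k ≥ 100 be an integer and let α, β be two distinct roots of the k-generalized Fibonacci polynomial f_k with |α| < 1 and |β| < 1. Then k^2/(13000·e^3) < |α − β|^2 · ∏ |α − γ|·|β − γ|, where the product is over all roots γ of f_k with |γ| < 1 and γ ∉ {α, β}. -/

import Mathlib

/-!
For a root `α` inside the unit disk, `(X - 1) f_k = X^(k+1) - 2 X^k + 1` gives
`(α - 1) f_k'(α) = α^(k-1) ((k+1) α - 2k)`, and `|α|^k |2 - α| = 1` forces `|α|^(k-1) ≥ 1/3`;
hence `|f_k'(α)| ≥ (k-1)/6`. In `f_k'(α) = ∏_{γ ≠ α} (α - γ)` (the roots are simple) at most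
one factor comes from a root outside the open unit disk, and it has modulus at most `3`: a root
with `|γ| ≥ 1` is real positive, because `|γ|^k ≤ ∑_{i<k} |γ|^i` turns `|γ|^k |2 - γ| = 1`
into `|2 - γ| ≤ 2 - |γ|`, and `x^k = ∑_{i<k} x^i` has only one positive solution. So
`|α - β| ∏_γ |α - γ| ≥ (k-1)/18`; multiplying this by the same bound with `α` and `β`
exchanged gives the claim.
-/

open Polynomial Real

/-- The `k`-generalized Fibonacci polynomial `f_k(X) = X^k - X^(k-1) - ⋯ - X - 1`,
viewed as a polynomial over `ℂ`. -/
noncomputable def fibPoly (k : ℕ) : Polynomial ℂ :=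
  X ^ k - ∑ i ∈ Finset.range k, X ^ i

open Finset

theorem Complex.eq_norm_of_norm_sub_le {c : ℝ} (hc : 0 < c) {z : ℂ}
    (h : ‖(c : ℂ) - z‖ ≤ c - ‖z‖) : z = ‖z‖ := by
  have hsq : ‖(c : ℂ) - z‖ ^ 2 ≤ (c - ‖z‖) ^ 2 := pow_le_pow_left₀ (norm_nonneg _) h 2
  have hre : z.re = ‖z‖ := by
    rw [Complex.sq_norm, Complex.normSq_apply] at hsq
    have hz := Complex.sq_norm z
    rw [Complex.normSq_apply] at hz
    simp only [Complex.sub_re, Complex.ofReal_re, Complex.sub_im, Complex.ofReal_im] at hsq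
    nlinarith [Complex.re_le_norm z]
  have him : z.im = 0 := Complex.abs_re_eq_norm.mp (by rw [hre, abs_norm])
  exact Complex.ext (by simp [hre]) (by simp [him])

theorem eq_of_pow_eq_geom_sum {k : ℕ} {x y : ℝ} (hx : 0 < x) (hy : 0 < y)
    (hxk : x ^ k = ∑ i ∈ range k, x ^ i) (hyk : y ^ k = ∑ i ∈ range k, y ^ i) : x = y := by
  wlog hxy : x < y generalizing x y
  · rcases (not_lt.mp hxy).lt_or_eq with h | h
    · exact (this hy hx hyk hxk h).symm
    · exact h.symm
  have hk : k ≠ 0 := by rintro rfl; simp at hxk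
  -- both sums below equal `x ^ k * y ^ k`, but the first is termwise smaller
  have hlt : ∑ i ∈ range k, x ^ k * y ^ i < ∑ i ∈ range k, y ^ k * x ^ i := by
    refine sum_lt_sum_of_nonempty (nonempty_range_iff.mpr hk) fun i hi => ?_
    obtain ⟨j, rfl⟩ := Nat.exists_eq_add_of_lt (mem_range.mp hi)
    have : x ^ (j + 1) < y ^ (j + 1) := pow_lt_pow_left₀ hxy hx.le (by omega)
    calc x ^ (i + j + 1) * y ^ i = (x ^ i * y ^ i) * x ^ (j + 1) := by ring
      _ < (x ^ i * y ^ i) * y ^ (j + 1) := by gcongr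
      _ = y ^ (i + j + 1) * x ^ i := by ring
  rw [← mul_sum, ← mul_sum, ← hxk, ← hyk, mul_comm] at hlt
  exact absurd hlt (lt_irrefl _)

theorem eval_fibPoly (k : ℕ) (z : ℂ) :
    (fibPoly k).eval z = z ^ k - ∑ i ∈ range k, z ^ i := by
  simp [fibPoly, eval_finsetSum]

theorem fibPoly_monic (k : ℕ) : (fibPoly k).Monic := by
  refine monic_X_pow_sub ((degree_sum_le _ _).trans_lt ?_)
  exact (Finset.sup_lt_iff (WithBot.bot_lt_coe k)).mpr fun i hi =>
    (degree_X_pow_le i).trans_lt (Nat.cast_lt.mpr (mem_range.mp hi))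

theorem X_sub_one_mul_fibPoly (k : ℕ) : (X - 1) * fibPoly k = X ^ (k + 1) - 2 * X ^ k + 1 := by
  rw [fibPoly]
  linear_combination -(geom_sum_mul (X : ℂ[X]) k)

section Roots

variable {k : ℕ} {γ : ℂ}

theorem fibPoly_root_pow_eq (h : (fibPoly k).IsRoot γ) : γ ^ k = ∑ i ∈ range k, γ ^ i := by
  rw [IsRoot, eval_fibPoly, sub_eq_zero] at h
  exact h

theorem fibPoly_root_pow_mul_two_sub (h : (fibPoly k).IsRoot γ) : γ ^ k * (2 - γ) = 1 := by
  have := congrArg (eval γ) (X_sub_one_mul_fibPoly k)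
  simp only [eval_mul, eval_sub, eval_X, eval_one, h.eq_zero, eval_add, eval_pow,
    eval_ofNat] at this
  linear_combination this

theorem fibPoly_root_ne_zero (h : (fibPoly k).IsRoot γ) : γ ≠ 0 := by
  rintro rfl
  rcases k with _ | k
  · simp [fibPoly] at h
  · simpa using fibPoly_root_pow_mul_two_sub h

theorem fibPoly_root_eq_norm_of_one_le_norm (h : (fibPoly k).IsRoot γ) (hγ : 1 ≤ ‖γ‖) :
    γ = ‖γ‖ := by
  set r := ‖γ‖
  have hr : 0 < r ^ k := by positivity
  have hsum : r ^ k ≤ ∑ i ∈ range k, r ^ i := by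
    calc r ^ k = ‖∑ i ∈ range k, γ ^ i‖ := by rw [← fibPoly_root_pow_eq h, norm_pow]
      _ ≤ ∑ i ∈ range k, ‖γ ^ i‖ := norm_sum_le _ _
      _ = ∑ i ∈ range k, r ^ i := by simp only [norm_pow]; rfl
  have hnorm : r ^ k * ‖2 - γ‖ = 1 := by
    simpa using congrArg norm (fibPoly_root_pow_mul_two_sub h)
  -- `r ^ k * (2 - r) = 1 + (r - 1) * (∑ r ^ i - r ^ k) ≥ 1`
  have hgeom := geom_sum_mul r k
  have hle : r ^ k * ‖2 - γ‖ ≤ r ^ k * (2 - r) := by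
    nlinarith [mul_nonneg (sub_nonneg.mpr hγ) (sub_nonneg.mpr hsum)]
  exact Complex.eq_norm_of_norm_sub_le two_pos (by exact_mod_cast le_of_mul_le_mul_left hle hr)

theorem fibPoly_root_eq_of_one_le_norm {δ : ℂ} (hγ : (fibPoly k).IsRoot γ)
    (hδ : (fibPoly k).IsRoot δ) (hγ1 : 1 ≤ ‖γ‖) (hδ1 : 1 ≤ ‖δ‖) : γ = δ := by
  have hreal {z : ℂ} (hz : (fibPoly k).IsRoot z) (hz1 : 1 ≤ ‖z‖) :
      ‖z‖ ^ k = ∑ i ∈ range k, ‖z‖ ^ i := by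
    have := fibPoly_root_pow_eq hz
    rw [fibPoly_root_eq_norm_of_one_le_norm hz hz1] at this
    exact_mod_cast this
  rw [fibPoly_root_eq_norm_of_one_le_norm hγ hγ1, fibPoly_root_eq_norm_of_one_le_norm hδ hδ1,
    eq_of_pow_eq_geom_sum (by positivity) (by positivity) (hreal hγ hγ1) (hreal hδ hδ1)]

theorem fibPoly_root_norm_lt_two (h : (fibPoly k).IsRoot γ) : ‖γ‖ < 2 := by
  rcases lt_or_ge ‖γ‖ 1 with hγ | hγ
  · linarith
  · have := fibPoly_root_pow_mul_two_sub h
    rw [fibPoly_root_eq_norm_of_one_le_norm h hγ] at this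
    have hreal : ‖γ‖ ^ k * (2 - ‖γ‖) = 1 := by exact_mod_cast this
    by_contra! h2
    nlinarith [pow_nonneg (norm_nonneg γ) k]

theorem fibPoly_root_sub_one_mul_eval_derivative (hk : k ≠ 0) (h : (fibPoly k).IsRoot γ) :
    (γ - 1) * (derivative (fibPoly k)).eval γ = γ ^ (k - 1) * ((k + 1) * γ - 2 * k) := by
  obtain ⟨j, rfl⟩ := Nat.exists_eq_add_one_of_ne_zero hk
  have := congrArg (fun p => (derivative p).eval γ) (X_sub_one_mul_fibPoly (j + 1))
  simp only [derivative_mul, derivative_sub, derivative_X, derivative_one, sub_zero, one_mul,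
    eval_add, h.eq_zero, eval_mul, eval_sub, eval_X, eval_one, zero_add,
    derivative_X_pow_succ, Nat.cast_add, Nat.cast_one, map_add, map_natCast, map_one,
    derivative_ofNat, zero_mul, add_zero, eval_natCast, eval_pow, eval_ofNat] at this
  push_cast [Nat.add_sub_cancel]
  linear_combination this

theorem eval_derivative_fibPoly_ne_zero (hk : 2 ≤ k) (h : (fibPoly k).IsRoot γ) :
    (derivative (fibPoly k)).eval γ ≠ 0 := by
  intro h0
  have hlin : (k + 1) * γ = 2 * k := by
    have := fibPoly_root_sub_one_mul_eval_derivative (by omega) h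
    rw [h0, mul_zero, eq_comm] at this
    linear_combination (mul_eq_zero.mp this).resolve_left
      (pow_ne_zero _ (fibPoly_root_ne_zero h))
  have hpow : 2 * γ ^ k = k + 1 := by
    linear_combination (k + 1) * fibPoly_root_pow_mul_two_sub h + γ ^ k * hlin
  -- taking norms: `r = 2k/(k+1)` and `2 r ^ k = k + 1`, which Bernoulli's inequality forbids
  have hnorm_k : ‖(k : ℂ) + 1‖ = k + 1 := by exact_mod_cast Complex.norm_natCast (k + 1)
  have hr : ((k : ℝ) + 1) * ‖γ‖ = 2 * k := by
    simpa [norm_mul, hnorm_k] using congrArg norm hlin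
  have hrk : 2 * ‖γ‖ ^ k = k + 1 := by
    simpa [norm_mul, norm_pow, hnorm_k] using congrArg norm hpow
  have hbern := one_add_mul_le_pow (a := ‖γ‖ - 1) (by linarith [norm_nonneg γ]) k
  rw [add_sub_cancel] at hbern
  have hk' : (2 : ℝ) ≤ k := by exact_mod_cast hk
  nlinarith

theorem fibPoly_roots_nodup (hk : 2 ≤ k) : (fibPoly k).roots.Nodup := by
  classical
  refine Multiset.nodup_iff_count_le_one.mpr fun γ => ?_
  rw [count_roots]
  by_contra! hγ
  obtain ⟨hroot, hderiv⟩ := (one_lt_rootMultiplicity_iff_isRoot (fibPoly_monic k).ne_zero).mp hγ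
  exact eval_derivative_fibPoly_ne_zero hk hroot hderiv

theorem eval_derivative_fibPoly_eq_prod (hk : 2 ≤ k) {α : ℂ} (hα : (fibPoly k).IsRoot α) :
    (derivative (fibPoly k)).eval α = ∏ γ ∈ (fibPoly k).roots.toFinset.erase α, (α - γ) := by
  classical
  rw [(IsAlgClosed.splits _).eval_root_derivative (fibPoly_monic k)
      ((mem_roots (fibPoly_monic k).ne_zero).mpr hα), prod_eq_multiset_prod, erase_val,
    Multiset.toFinset_val, (fibPoly_roots_nodup hk).dedup]

theorem le_norm_eval_derivative_fibPoly (hk : k ≠ 0) {α : ℂ} (hα : (fibPoly k).IsRoot α)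
    (hα1 : ‖α‖ < 1) : ((k : ℝ) - 1) / 6 ≤ ‖(derivative (fibPoly k)).eval α‖ := by
  have hid := congrArg norm (fibPoly_root_sub_one_mul_eval_derivative hk hα)
  rw [norm_mul, norm_mul, norm_pow] at hid
  have hpow : 1 / 3 ≤ ‖α‖ ^ (k - 1) := by
    have h1 : ‖α‖ ^ k * ‖2 - α‖ = 1 := by
      simpa using congrArg norm (fibPoly_root_pow_mul_two_sub hα)
    have h2 : ‖2 - α‖ ≤ 3 := by
      have := norm_sub_le (2 : ℂ) α
      rw [Complex.norm_two] at this
      linarith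
    have h3 : ‖α‖ ^ k ≤ ‖α‖ ^ (k - 1) := pow_le_pow_of_le_one (norm_nonneg α) hα1.le (by omega)
    rw [div_le_iff₀ three_pos]
    nlinarith [pow_nonneg (norm_nonneg α) k]
  have hlin : (k : ℝ) - 1 ≤ ‖(k + 1) * α - 2 * k‖ := by
    have := norm_sub_norm_le (2 * (k : ℂ)) ((k + 1) * α)
    have hnorm_k : ‖(k : ℂ) + 1‖ = k + 1 := by exact_mod_cast Complex.norm_natCast (k + 1)
    rw [norm_sub_rev, norm_mul, norm_mul, hnorm_k, Complex.norm_two, Complex.norm_natCast] at this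
    nlinarith
  have hsub : ‖α - 1‖ ≤ 2 := by
    have := norm_sub_le α 1
    rw [norm_one] at this
    linarith
  have hk1 : (1 : ℝ) ≤ k := by exact_mod_cast Nat.one_le_iff_ne_zero.mpr hk
  nlinarith [mul_le_mul hpow hlin (by linarith) (by positivity),
    norm_nonneg ((derivative (fibPoly k)).eval α)]

theorem prod_norm_sub_fibPoly_roots_le_three {α : ℂ} (hα : ‖α‖ ≤ 1) {T : Finset ℂ}
    (hT : ∀ γ ∈ T, (fibPoly k).IsRoot γ ∧ 1 ≤ ‖γ‖) : ∏ γ ∈ T, ‖α - γ‖ ≤ 3 := by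
  rcases T.eq_empty_or_nonempty with rfl | ⟨γ, hγ⟩
  · norm_num
  have hTγ : T = {γ} := eq_singleton_iff_unique_mem.mpr ⟨hγ, fun δ hδ =>
    fibPoly_root_eq_of_one_le_norm (hT δ hδ).1 (hT γ hγ).1 (hT δ hδ).2 (hT γ hγ).2⟩
  rw [hTγ, prod_singleton]
  linarith [norm_sub_le α γ, fibPoly_root_norm_lt_two (hT γ hγ).1]

theorem div_eighteen_le_norm_sub_mul_prod (hk : 2 ≤ k) {α β : ℂ}
    (hα : (fibPoly k).IsRoot α) (hβ : (fibPoly k).IsRoot β) (hne : α ≠ β)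
    (hα1 : ‖α‖ < 1) (hβ1 : ‖β‖ < 1) :
    ((k : ℝ) - 1) / 18 ≤ ‖α - β‖ *
      ∏ γ ∈ (fibPoly k).roots.toFinset.filter (fun γ => ‖γ‖ < 1 ∧ γ ≠ α ∧ γ ≠ β), ‖α - γ‖ := by
  set S := (fibPoly k).roots.toFinset.filter (fun γ => ‖γ‖ < 1 ∧ γ ≠ α ∧ γ ≠ β)
  set E := (fibPoly k).roots.toFinset.erase α
  have hroot {γ : ℂ} (hγ : γ ∈ E) : (fibPoly k).IsRoot γ :=
    (mem_roots (fibPoly_monic k).ne_zero).mp (Multiset.mem_toFinset.mp (mem_of_mem_erase hγ))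
  have hD : ((k : ℝ) - 1) / 6 ≤ ∏ γ ∈ E, ‖α - γ‖ := by
    rw [← norm_prod, ← eval_derivative_fibPoly_eq_prod hk hα]
    exact le_norm_eval_derivative_fibPoly (by omega) hα hα1
  have hβE : β ∈ E.filter (‖·‖ < 1) := by
    refine mem_filter.mpr ⟨mem_erase.mpr ⟨hne.symm, ?_⟩, hβ1⟩
    exact Multiset.mem_toFinset.mpr ((mem_roots (fibPoly_monic k).ne_zero).mpr hβ)
  have hS : (E.filter (‖·‖ < 1)).erase β = S := by
    ext γ
    simp only [S, E, mem_erase, mem_filter]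
    tauto
  have hT : ∏ γ ∈ E.filter (¬‖·‖ < 1), ‖α - γ‖ ≤ 3 :=
    prod_norm_sub_fibPoly_roots_le_three hα1.le fun γ hγ =>
      ⟨hroot (mem_filter.mp hγ).1, not_lt.mp (mem_filter.mp hγ).2⟩
  rw [← prod_filter_mul_prod_filter_not E (‖·‖ < 1), ← mul_prod_erase _ _ hβE, hS] at hD
  have hA : 0 ≤ ‖α - β‖ * ∏ γ ∈ S, ‖α - γ‖ := by positivity
  linarith [mul_le_mul_of_nonneg_left hT hA]

end Roots

/-- Let `k ≥ 100` and let `α, β` be two distinct roots of `f_k` with `|α| < 1` and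
`|β| < 1`. Then `k²/(13000·e³) < |α − β|² · ∏ |α − γ|·|β − γ|`, the product being over
all roots `γ` of `f_k` with `|γ| < 1` and `γ ∉ {α, β}`. -/
theorem fibPoly_separation_product_bound (k : ℕ) (hk : 100 ≤ k) (α β : ℂ)
    (hα : (fibPoly k).IsRoot α) (hβ : (fibPoly k).IsRoot β) (hne : α ≠ β)
    (hα1 : ‖α‖ < 1) (hβ1 : ‖β‖ < 1) :
    (k : ℝ) ^ 2 / (13000 * Real.exp 1 ^ 3) <
      ‖α - β‖ ^ 2 *
        ∏ γ ∈ (fibPoly k).roots.toFinset.filter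
            (fun γ => ‖γ‖ < 1 ∧ γ ≠ α ∧ γ ≠ β),
          ‖α - γ‖ * ‖β - γ‖ := by
  have hαβ := div_eighteen_le_norm_sub_mul_prod (by omega) hα hβ hne hα1 hβ1
  have hβα := div_eighteen_le_norm_sub_mul_prod (by omega) hβ hα hne.symm hβ1 hα1
  rw [norm_sub_rev, filter_congr fun γ _ => by rw [and_comm (a := γ ≠ β)]] at hβα
  have hk' : (100 : ℝ) ≤ k := by exact_mod_cast hk
  have he : (2 : ℝ) ^ 3 < Real.exp 1 ^ 3 :=
    pow_lt_pow_left₀ (by linarith [Real.exp_one_gt_d9]) (by norm_num) (by norm_num)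
  calc (k : ℝ) ^ 2 / (13000 * Real.exp 1 ^ 3) < (((k : ℝ) - 1) / 18) ^ 2 := by
        rw [div_lt_iff₀ (by positivity)]
        nlinarith
    _ ≤ _ := by
        rw [prod_mul_distrib, sq, sq, mul_mul_mul_comm]
        exact mul_le_mul hαβ hβα (by linarith) (by positivity)
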